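/- arXiv:2501.12083 — 3 statements merged into one kernel-verified Lean document; each statement's English description precedes it below -/
import Mathlib

section
/- MacMahon's equidistribution theorem: the generating function of the statistic inv over S_n equals the generating function of the statistic maj over S_n, and both equal the q-factorial [n]_q [n-1]_q ⋯ [1]_q, where [k]_q = 1 + q + ⋯ + q^{k-1}. -/
/-!
Every permutation of `Fin (n + 1)` arises exactly once by inserting the largest letter `n` at
some position `p ≤ n` into a permutation `σ` of `Fin n`. This insertion adds `n - p` inversions,
and it raises the major index by an amount that runs exactly once through `0, …, n` as `p` varies:
`0` at the end, `1, …, des σ` at the slots right after the descents of `σ` read from right to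
left, and the remaining values at the other slots read from left to right. So both generating
functions get multiplied by `[n + 1]_q` at each step.
-/

open Finset Equiv

namespace PaperStat

noncomputable section

attribute [local instance] Classical.propDecidable

/-- number of inversions of a permutation (pairs i<j with π i > π j) -/
def inv {n : ℕ} (π : Perm (Fin n)) : ℕ :=
  (univ.filter (fun p : Fin n × Fin n => p.1 < p.2 ∧ π p.2 < π p.1)).card

/-- pairs (i, i+1) forming an r-descent -/
def desSet {n : ℕ} (r : ℕ) (π : Perm (Fin n)) : Finset (Fin n × Fin n) :=
  univ.filter (fun p : Fin n × Fin n =>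
    (p.2 : ℕ) = (p.1 : ℕ) + 1 ∧ (π p.2 : ℕ) + r ≤ (π p.1 : ℕ))

/-- r-descent number -/
def rdes {n : ℕ} (r : ℕ) (π : Perm (Fin n)) : ℕ := (desSet r π).card

/-- r-major index: sum of (1-based) r-descent positions plus |rInv| -/
def rmaj {n : ℕ} (r : ℕ) (π : Perm (Fin n)) : ℕ :=
  (∑ p ∈ desSet r π, ((p.1 : ℕ) + 1)) +
  (univ.filter (fun p : Fin n × Fin n =>
      p.1 < p.2 ∧ (π p.2 : ℕ) < (π p.1 : ℕ) ∧ (π p.1 : ℕ) < (π p.2 : ℕ) + r)).card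

/-- descent number -/
def des {n : ℕ} (π : Perm (Fin n)) : ℕ := rdes 1 π

/-- major index -/
def maj {n : ℕ} (π : Perm (Fin n)) : ℕ := ∑ p ∈ desSet 1 π, ((p.1 : ℕ) + 1)

/-- i is a g-gap L-level excedance place (1-based: π_i ≥ i+g and π_i ≥ L) -/
def excp {n : ℕ} (g L : ℕ) (π : Perm (Fin n)) (i : Fin n) : Prop :=
  (i : ℕ) + g ≤ (π i : ℕ) ∧ L ≤ (π i : ℕ) + 1

/-- g-gap ℓ-level excedance number: positions i ≥ ℓ (1-based) with π_i ≥ i+g -/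
def gexc {n : ℕ} (g l : ℕ) (π : Perm (Fin n)) : ℕ :=
  (univ.filter (fun i : Fin n => l ≤ (i : ℕ) + 1 ∧ (i : ℕ) + g ≤ (π i : ℕ))).card

/-- inversions of the subword of π on positions satisfying P -/
def invOn {n : ℕ} (π : Perm (Fin n)) (P : Fin n → Prop) : ℕ :=
  (univ.filter (fun p : Fin n × Fin n =>
    P p.1 ∧ P p.2 ∧ p.1 < p.2 ∧ π p.2 < π p.1)).card

/-- g-gap L-level Denert statistic: Σ_{i ∈ gExcp}(i+g-1) (1-based) + inversions
of the excedance subword + inversions of the non-excedance subword -/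
def gden {n : ℕ} (g L : ℕ) (π : Perm (Fin n)) : ℕ :=
  (∑ i ∈ univ.filter (fun i : Fin n => excp g L π i), ((i : ℕ) + g)) +
  invOn π (fun i => excp g L π i) +
  invOn π (fun i => ¬ excp g L π i)

def insertPerm {n : ℕ} (p b : Fin (n + 1)) (σ : Perm (Fin n)) : Perm (Fin (n + 1)) :=
  ((finSuccEquiv' p).trans (optionCongr σ)).trans (finSuccEquiv' b).symm

section insertPerm

variable {n : ℕ}

@[simp] lemma insertPerm_apply_self (p b : Fin (n + 1)) (σ : Perm (Fin n)) :
    insertPerm p b σ p = b := by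
  simp [insertPerm]

@[simp] lemma insertPerm_apply_succAbove (p b : Fin (n + 1)) (σ : Perm (Fin n)) (j : Fin n) :
    insertPerm p b σ (p.succAbove j) = b.succAbove (σ j) := by
  simp [insertPerm]

lemma eq_of_insertPerm_eq {p b b' : Fin (n + 1)} {σ σ' : Perm (Fin n)}
    (h : insertPerm p b σ = insertPerm p b' σ') : b = b' ∧ σ = σ' := by
  have hb : b = b' := by simpa using DFunLike.congr_fun h p
  subst hb
  refine ⟨rfl, Equiv.ext fun j => ?_⟩
  simpa using DFunLike.congr_fun h (p.succAbove j)

lemma bijective_insertPerm (b : Fin (n + 1)) :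
    Function.Bijective fun x : Fin (n + 1) × Perm (Fin n) => insertPerm x.1 b x.2 := by
  refine (Fintype.bijective_iff_injective_and_card _).2 ⟨?_, ?_⟩
  · rintro ⟨p, σ⟩ ⟨p', σ'⟩ h
    dsimp only at h
    obtain rfl : p = p' := (insertPerm p' b σ').injective <| by
      rw [insertPerm_apply_self, ← h, insertPerm_apply_self]
    rw [(eq_of_insertPerm_eq h).2]
  · simp [Fintype.card_perm, Nat.factorial_succ]

end insertPerm

lemma inv_eq_sum {n : ℕ} (π : Perm (Fin n)) :
    inv π = ∑ i, ∑ j, if i < j ∧ π j < π i then 1 else 0 := by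
  rw [inv, card_filter, ← univ_product_univ, sum_product]

lemma card_lt_succAbove {n : ℕ} (p : Fin (n + 1)) :
    #{j : Fin n | p < p.succAbove j} = n - p := by
  have h := Fin.sum_univ_succAbove (fun x => if p < x then 1 else 0) p
  rw [← card_filter, ← card_filter, Finset.filter_lt_eq_Ioi, Fin.card_Ioi] at h
  simpa using h.symm

lemma inv_insertPerm_last {n : ℕ} (p : Fin (n + 1)) (σ : Perm (Fin n)) :
    inv (insertPerm p (Fin.last n) σ) = (n - p) + inv σ := by
  rw [inv_eq_sum, inv_eq_sum, Fin.sum_univ_succAbove _ p]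
  simp [Fin.sum_univ_succAbove _ p, Fin.succAbove_lt_succAbove_iff,
    fun x => lt_asymm (Fin.castSucc_lt_last x), card_lt_succAbove]

section Words

/-- The major index of the word `w 0 ⋯ w (m - 1)`, each descent counted by its right end; the
term `i = 0` vanishes because `0 - 1 = 0` in `ℕ`. -/
def majWord (m : ℕ) (w : ℕ → ℕ) : ℕ :=
  ∑ i ∈ range m, if w i < w (i - 1) then i else 0

def insertAt (p v : ℕ) (w : ℕ → ℕ) (i : ℕ) : ℕ :=
  if i < p then w i else if i = p then v else w (i - 1)

def numDescentsAfter (m p : ℕ) (w : ℕ → ℕ) : ℕ :=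
  #{i ∈ Ico (p + 1) m | w i < w (i - 1)}

/-- The increase of the major index when a letter larger than all others is inserted at
position `p` of the word `w` of length `m`. -/
def majIncrement (m p : ℕ) (w : ℕ → ℕ) : ℕ :=
  if p = m then 0
  else if w p < w (p - 1) then 1 + numDescentsAfter m p w
  else p + 1 + numDescentsAfter m p w

variable {m p v : ℕ} {w : ℕ → ℕ}

lemma majWord_succ : majWord (m + 1) w = majWord m w + if w m < w (m - 1) then m else 0 :=
  sum_range_succ _ _

lemma majWord_congr {w' : ℕ → ℕ} (h : ∀ i < m, w i = w' i) : majWord m w = majWord m w' :=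
  sum_congr rfl fun i hi => by
    rw [mem_range] at hi
    rw [h i hi, h (i - 1) (by omega)]

lemma numDescentsAfter_succ (h : p < m) :
    numDescentsAfter (m + 1) p w = numDescentsAfter m p w + if w m < w (m - 1) then 1 else 0 := by
  rw [numDescentsAfter, numDescentsAfter, card_filter, card_filter, sum_Ico_succ_top (by omega)]

lemma majWord_insertAt_self (hv : ∀ i < m, w i < v) :
    majWord (m + 1) (insertAt m v w) = majWord m w := by
  rw [majWord_succ, majWord_congr (w := insertAt m v w) (w' := w) fun i hi => if_pos hi,
    if_neg, add_zero]
  simp only [insertAt]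
  split_ifs <;> grind

lemma majWord_insertAt_of_lt (hpm : p < m) (hv : ∀ i < m, w i < v) :
    majWord (m + 1) (insertAt p v w) + (if w p < w (p - 1) then p else 0) =
      majWord m w + (p + 1) + numDescentsAfter m p w := by
  induction m, hpm using Nat.le_induction with
  | base =>
    have : numDescentsAfter (p + 1) p w = 0 := by simp [numDescentsAfter]
    rw [majWord_succ, majWord_succ, majWord_succ (m := p) (w := w),
      majWord_congr (w := insertAt p v w) (w' := w) fun i hi => if_pos hi, this]
    have := hv p (by omega)
    have := hv (p - 1) (by omega)
    simp only [insertAt, Nat.add_sub_cancel]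
    split_ifs <;> omega
  | succ m hpm ih =>
    have hins : ∀ i, p < i → insertAt p v w i = w (i - 1) := fun i hi => by
      rw [insertAt, if_neg (by omega), if_neg (by omega)]
    rw [majWord_succ, majWord_succ (m := m) (w := w), numDescentsAfter_succ (by omega),
      hins _ (by omega), hins _ (by omega), Nat.add_sub_cancel]
    have := ih fun i hi => hv i (by omega)
    split_ifs at this ⊢ <;> omega

lemma majWord_insertAt (hp : p ≤ m) (hv : ∀ i < m, w i < v) :
    majWord (m + 1) (insertAt p v w) = majWord m w + majIncrement m p w := by
  rcases hp.eq_or_lt with rfl | hpm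
  · rw [majWord_insertAt_self hv, majIncrement, if_pos rfl, add_zero]
  · have := majWord_insertAt_of_lt hpm hv
    rw [majIncrement, if_neg hpm.ne]
    split_ifs at this ⊢ <;> omega

lemma numDescentsAfter_le : numDescentsAfter m p w ≤ m - (p + 1) :=
  (card_filter_le _ _).trans (Nat.card_Ico _ _).le

lemma numDescentsAfter_eq_add {p' : ℕ} (hp : p ≤ p') (hp' : p' < m) :
    numDescentsAfter m p w =
      #{i ∈ Ico (p + 1) (p' + 1) | w i < w (i - 1)} + numDescentsAfter m p' w := by
  rw [numDescentsAfter, numDescentsAfter, card_filter, card_filter, card_filter,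
    sum_Ico_consecutive _ (by omega) (by omega)]

lemma majIncrement_le (hp : p ≤ m) : majIncrement m p w ≤ m := by
  have := numDescentsAfter_le (m := m) (p := p) (w := w)
  unfold majIncrement
  split_ifs <;> omega

lemma majIncrement_ne_of_lt {p' : ℕ} (hp : p < p') (hp' : p' ≤ m) :
    majIncrement m p w ≠ majIncrement m p' w := by
  rcases hp'.eq_or_lt with rfl | hp'
  · rw [majIncrement, majIncrement, if_pos rfl, if_neg hp.ne]
    split_ifs <;> omega
  have hsplit := numDescentsAfter_eq_add (w := w) hp.le hp'
  rw [majIncrement, majIncrement, if_neg (by omega), if_neg hp'.ne]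
  by_cases hd : w p' < w (p' - 1)
  · have : 0 < #{i ∈ Ico (p + 1) (p' + 1) | w i < w (i - 1)} :=
      card_pos.2 ⟨p', mem_filter.2 ⟨mem_Ico.2 ⟨by omega, by omega⟩, hd⟩⟩
    rw [if_pos hd]
    split_ifs <;> omega
  · have : #{i ∈ Ico (p + 1) (p' + 1) | w i < w (i - 1)} ≤ p' - (p + 1) := by
      rw [← Nat.card_Ico]
      refine card_le_card fun i hi => ?_
      simp only [mem_filter, mem_Ico] at hi ⊢
      exact ⟨hi.1.1, lt_of_le_of_ne (Nat.lt_succ_iff.1 hi.1.2) (by rintro rfl; exact hd hi.2)⟩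
    rw [if_neg hd]
    split_ifs <;> omega

lemma majIncrement_injective (m : ℕ) (w : ℕ → ℕ) :
    Function.Injective fun p : Fin (m + 1) => majIncrement m p w := by
  intro p p' h
  rcases lt_trichotomy p p' with hlt | heq | hgt
  · exact absurd h (majIncrement_ne_of_lt hlt (Nat.lt_succ_iff.1 p'.isLt))
  · exact heq
  · exact absurd h.symm (majIncrement_ne_of_lt hgt (Nat.lt_succ_iff.1 p.isLt))

end Words

section PermWord

variable {n : ℕ}

def word (π : Perm (Fin n)) (i : ℕ) : ℕ :=
  if h : i < n then π ⟨i, h⟩ else 0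

lemma word_of_lt (π : Perm (Fin n)) (i : Fin n) : word π i = π i := by
  simp [word]

lemma maj_eq_majWord (π : Perm (Fin n)) : maj π = majWord n (word π) := by
  rw [maj, majWord, ← sum_filter]
  refine sum_bij (fun x _ => x.2) ?_ ?_ ?_ ?_
  · rintro ⟨a, b⟩ hab
    simp only [desSet, mem_filter, mem_univ, true_and] at hab
    have hb : (b : ℕ) - 1 = a := by omega
    simp only [mem_filter, mem_range, b.isLt, true_and]
    rw [word_of_lt, hb, word_of_lt]
    omega
  · intro x hx y hy h
    simp only [desSet, mem_filter, mem_univ, true_and] at hx hy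
    have h2 : (x.2 : ℕ) = y.2 := h
    exact Prod.ext (Fin.ext (by omega)) (Fin.ext h2)
  · intro i hi
    simp only [mem_filter, mem_range] at hi
    obtain ⟨hin, hd⟩ := hi
    have hi0 : i ≠ 0 := by rintro rfl; exact lt_irrefl _ hd
    refine ⟨(⟨i - 1, by omega⟩, ⟨i, hin⟩), ?_, rfl⟩
    simp only [desSet, mem_filter, mem_univ, true_and]
    rw [word, word, dif_pos hin, dif_pos (by omega)] at hd
    exact ⟨show i = i - 1 + 1 by omega, hd⟩
  · rintro ⟨a, b⟩ hab
    simp only [desSet, mem_filter, mem_univ, true_and] at hab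
    simp only [hab.1]

lemma word_insertPerm_last (p : Fin (n + 1)) (σ : Perm (Fin n)) :
    ∀ i < n + 1, word (insertPerm p (Fin.last n) σ) i = insertAt p n (word σ) i := by
  intro i hi
  obtain hx | ⟨j, hj⟩ := Fin.eq_self_or_eq_succAbove p ⟨i, hi⟩
  · obtain rfl : i = p := congrArg Fin.val hx
    simp [word, insertAt, hi]
  · have hij : i = (p.succAbove j : ℕ) := congrArg Fin.val hj
    rw [show word (insertPerm p (Fin.last n) σ) i = σ j by simp [word, hi, hj]]
    by_cases hjp : j.castSucc < p
    · rw [Fin.succAbove_of_castSucc_lt p j hjp] at hij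
      have : i < p := by rw [hij, Fin.val_castSucc]; exact hjp
      rw [insertAt, if_pos this, hij, Fin.val_castSucc, word_of_lt]
    · rw [Fin.succAbove_of_le_castSucc p j (not_lt.1 hjp)] at hij
      have : p < i := by simp [hij, Fin.lt_def] at hjp ⊢; omega
      rw [insertAt, if_neg (by omega), if_neg (by omega), hij, Fin.val_succ, Nat.add_sub_cancel,
        word_of_lt]

lemma maj_insertPerm_last (p : Fin (n + 1)) (σ : Perm (Fin n)) :
    maj (insertPerm p (Fin.last n) σ) = maj σ + majIncrement n p (word σ) := by
  rw [maj_eq_majWord, maj_eq_majWord, majWord_congr (word_insertPerm_last p σ),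
    majWord_insertAt (Nat.lt_succ_iff.1 p.isLt) fun i hi => by simp [word, hi]]

end PermWord

lemma sum_comp_eq_sum_range {M : Type*} [AddCommMonoid M] (g : ℕ → M) {m : ℕ} (f : Fin m → ℕ)
    (hf : Function.Injective f) (hf_lt : ∀ p, f p < m) :
    ∑ p, g (f p) = ∑ j ∈ range m, g j := by
  have hbij : Function.Bijective fun p => (⟨f p, hf_lt p⟩ : Fin m) :=
    Finite.injective_iff_bijective.1 fun p p' h => hf (congrArg Fin.val h)
  rw [Fintype.sum_bijective _ hbij _ (fun j : Fin m => g j) fun _ => rfl,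
    Fin.sum_univ_eq_sum_range]

theorem sum_pow_eq_prod_of_insertPerm_last {R : Type*} [CommSemiring R] (q : R)
    (s : ∀ n, Perm (Fin n) → ℕ) (h0 : s 0 1 = 0) (inc : ∀ n, Fin (n + 1) → Perm (Fin n) → ℕ)
    (hs : ∀ n p σ, s (n + 1) (insertPerm p (Fin.last n) σ) = s n σ + inc n p σ)
    (hinc : ∀ n σ, Function.Injective (inc n · σ)) (hinc_le : ∀ n p σ, inc n p σ ≤ n) (n : ℕ) :
    ∑ π, q ^ s n π = ∏ k ∈ range n, ∑ j ∈ range (k + 1), q ^ j := by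
  induction n with
  | zero => simp [h0]
  | succ n ih =>
    rw [prod_range_succ, ← ih, sum_mul,
      ← Fintype.sum_bijective _ (bijective_insertPerm (Fin.last n))
        (fun x => q ^ s (n + 1) (insertPerm x.1 (Fin.last n) x.2)) _ fun _ => rfl,
      Fintype.sum_prod_type, sum_comm]
    refine sum_congr rfl fun σ _ => ?_
    simp only [hs, pow_add, ← mul_sum]
    rw [sum_comp_eq_sum_range (q ^ ·) _ (hinc n σ) fun p => Nat.lt_succ_of_le (hinc_le n p σ)]

/-- MacMahon's equidistribution theorem. -/
theorem macmahon (n : ℕ) (R : Type*) [CommSemiring R] (q : R) :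
    (∑ π : Perm (Fin n), q ^ inv π) = (∑ π : Perm (Fin n), q ^ maj π) ∧
    (∑ π : Perm (Fin n), q ^ inv π) =
      ∏ k ∈ Finset.range n, ∑ j ∈ Finset.range (k + 1), q ^ j := by
  have hinv := sum_pow_eq_prod_of_insertPerm_last q (fun _ => inv) (by simp [inv])
    (fun n p _ => n - p) (fun n p σ => by rw [inv_insertPerm_last, add_comm])
    (fun n _ p p' h => Fin.ext (by have := p.isLt; have := p'.isLt; simp only at h; omega))
    (fun _ _ _ => Nat.sub_le _ _) n
  have hmaj := sum_pow_eq_prod_of_insertPerm_last q (fun _ => maj) (by simp [maj, desSet])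
    (fun n p σ => majIncrement n p (word σ)) (fun _ => maj_insertPerm_last)
    (fun n σ => majIncrement_injective n (word σ))
    (fun _ p _ => majIncrement_le (Nat.lt_succ_iff.1 p.isLt)) n
  exact ⟨hinv.trans hmaj.symm, hinv⟩

end

end PaperStat
end

section
/- For π ∈ S_{n-1} and r ≥ 1, the set S(π) = {π_i : π_{i-1} ≥ π_i + r} ∪ {π_i : π_i > n - r} has cardinality rdes(π) + r - 1, where rdes(π) = |{i ∈ [n-2] : π_i ≥ π_{i+1} + r}|. -/
/-!
The letters of the first set are exactly the bottoms `π_{i+1}` of the r-descents `(i, i+1)`,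
and distinct r-descents have distinct bottoms, so there are `rdes π` of them. The second set
consists of the `r - 1` largest values `n - r + 1, …, n - 1`, which no r-descent bottom reaches:
a bottom is at most `π_i - r ≤ n - 1 - r`. Hence the union is disjoint.
-/

open Finset Equiv

namespace PaperStat

noncomputable section

attribute [local instance] Classical.propDecidable

theorem card_filter_le_val_apply {n : ℕ} (π : Perm (Fin n)) (k : ℕ) :
    (univ.filter fun i : Fin n => k ≤ (π i : ℕ)).card = n - k := by
  have hperm : (univ.filter fun i : Fin n => k ≤ (π i : ℕ)).card =
      (univ.filter fun j : Fin n => k ≤ (j : ℕ)).card :=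
    card_equiv π (by simp)
  have hsplit := card_filter_add_card_filter_not (s := univ) (fun j : Fin n => (j : ℕ) < k)
  simp only [Fin.card_filter_val_lt, not_lt, card_univ, Fintype.card_fin] at hsplit
  omega

theorem card_filter_rdescent_bottom_eq_rdes {n : ℕ} (r : ℕ) (π : Perm (Fin n)) :
    (univ.filter fun i : Fin n =>
      ∃ p : Fin n, (i : ℕ) = (p : ℕ) + 1 ∧ (π i : ℕ) + r ≤ (π p : ℕ)).card = rdes r π := by
  have himage : (desSet r π).image Prod.snd = univ.filter fun i : Fin n =>
      ∃ p : Fin n, (i : ℕ) = (p : ℕ) + 1 ∧ (π i : ℕ) + r ≤ (π p : ℕ) := by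
    ext i
    simp [desSet]
  have hinj : Set.InjOn Prod.snd (desSet r π : Set (Fin n × Fin n)) := by
    rintro ⟨p, i⟩ hpi ⟨q, j⟩ hqj (rfl : i = j)
    simp only [desSet, coe_filter, mem_univ, true_and, Set.mem_ofPred_eq] at hpi hqj
    simp only [Prod.mk.injEq, and_true]
    exact Fin.ext (by omega)
  rw [← himage, card_image_of_injOn hinj, rdes]

theorem disjoint_filter_rdescent_bottom_top {n : ℕ} (r : ℕ) (π : Perm (Fin n)) :
    Disjoint
      (univ.filter fun i : Fin n => ∃ p : Fin n, (i : ℕ) = (p : ℕ) + 1 ∧ (π i : ℕ) + r ≤ (π p : ℕ))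
      (univ.filter fun i : Fin n => n + 1 - r ≤ (π i : ℕ)) := by
  refine disjoint_filter.2 fun i _ ⟨p, _, hle⟩ => ?_
  have := (π p).isLt
  omega

/-- |S(π)| = rdes(π) + r - 1, where π ∈ S_{n-1} with n = m+1. -/
theorem card_S (m r : ℕ) (hr : 1 ≤ r) (hn : r ≤ m + 1) (π : Perm (Fin m)) :
    (univ.filter (fun i : Fin m =>
        (∃ p : Fin m, (i : ℕ) = (p : ℕ) + 1 ∧ (π i : ℕ) + r ≤ (π p : ℕ)) ∨
        (m + 1 - r < (π i : ℕ) + 1))).card = rdes r π + r - 1 := by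
  simp_rw [Nat.lt_add_one_iff]
  rw [filter_or, card_union_of_disjoint (disjoint_filter_rdescent_bottom_top r π),
    card_filter_rdescent_bottom_eq_rdes, card_filter_le_val_apply]
  omega

end

end PaperStat
end

section
/- The statistic den^a generalizes gden_ℓ: for n, g, ℓ ≥ 1 and the weakly increasing sequence a = a_1…a_n with a_i = max(i+g-1, ℓ-1), one has den^a(π) = gden_ℓ(π) for every π ∈ S_n. -/
open Finset Equiv

namespace PaperStat

noncomputable section

attribute [local instance] Classical.propDecidable

/-- excedance with respect to a sequence a (1-based): π_i > a_i -/
def aExc {n : ℕ} (a : ℕ → ℕ) (π : Perm (Fin n)) (i : Fin n) : Prop :=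
  a ((i : ℕ) + 1) < (π i : ℕ) + 1

/-- B_i^a(π) = |{j : 1 ≤ j < π_i ≤ a_j}| -/
def Bstat {n : ℕ} (a : ℕ → ℕ) (π : Perm (Fin n)) (i : Fin n) : ℕ :=
  (univ.filter (fun j : Fin n =>
    (j : ℕ) + 1 < (π i : ℕ) + 1 ∧ (π i : ℕ) + 1 ≤ a ((j : ℕ) + 1))).card

/-- Han's statistic den^a -/
def denA {n : ℕ} (a : ℕ → ℕ) (π : Perm (Fin n)) : ℕ :=
  (∑ i ∈ univ.filter (fun i : Fin n => aExc a π i),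
      ((i : ℕ) + 1 + Bstat a π i)) +
  invOn π (fun i => aExc a π i) +
  invOn π (fun i => ¬ aExc a π i)

/-- den^a with a_i = max(i+g-1, ℓ-1) equals gden_ℓ. -/
theorem denA_eq_gden (n g l : ℕ) (hn : 1 ≤ n) (hg : 1 ≤ g) (hl : 1 ≤ l)
    (π : Perm (Fin n)) :
    denA (fun i => max (i + g - 1) (l - 1)) π = gden g l π := by
  set a : ℕ → ℕ := fun i => max (i + g - 1) (l - 1) with ha
  have hP : ∀ i : Fin n, aExc a π i ↔ excp g l π i := by
    intro i
    simp only [aExc, excp, ha]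
    omega
  have hfilter : univ.filter (fun i : Fin n => aExc a π i)
      = univ.filter (fun i : Fin n => excp g l π i) := by
    apply filter_congr
    intro i _
    simp [hP i]
  have hB : ∀ i : Fin n, excp g l π i → Bstat a π i = g - 1 := by
    intro i hi
    obtain ⟨h1, h2⟩ := hi
    have hπ : (π i : ℕ) < n := (π i).isLt
    rw [Bstat, Finset.card_filter,
      Fin.sum_univ_eq_sum_range
        (fun j => if ((j : ℕ) + 1 < (π i : ℕ) + 1 ∧ (π i : ℕ) + 1 ≤ a (j + 1)) then 1 else 0),
      ← Finset.card_filter]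
    have hset : (Finset.range n).filter
        (fun j => j + 1 < (π i : ℕ) + 1 ∧ (π i : ℕ) + 1 ≤ a (j + 1))
        = Finset.Ico ((π i : ℕ) + 1 - g) (π i : ℕ) := by
      ext j
      simp only [Finset.mem_filter, Finset.mem_range, Finset.mem_Ico, ha]
      omega
    rw [hset, Nat.card_Ico]
    omega
  have hsum : (∑ i ∈ univ.filter (fun i : Fin n => aExc a π i),
      ((i : ℕ) + 1 + Bstat a π i))
      = ∑ i ∈ univ.filter (fun i : Fin n => excp g l π i), ((i : ℕ) + g) := by
    rw [hfilter]
    apply Finset.sum_congr rfl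
    intro i hi
    have hex : excp g l π i := (Finset.mem_filter.mp hi).2
    rw [hB i hex]
    omega
  have hi1 : invOn π (fun i => aExc a π i) = invOn π (fun i => excp g l π i) := by
    unfold invOn
    congr 1
    ext p
    simp only [Finset.mem_filter, hP p.1, hP p.2]
  have hi2 : invOn π (fun i => ¬ aExc a π i) = invOn π (fun i => ¬ excp g l π i) := by
    unfold invOn
    congr 1
    ext p
    simp only [Finset.mem_filter, hP p.1, hP p.2]
  rw [denA, gden, hsum, hi1, hi2]

end

end PaperStat
end
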